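/- Let D be a probability measure on G, h* a hypothesis, and suppose the disagreement coefficient θ satisfies D(DIS(B(h*, r))) ≤ θ · r for a given r ≥ ε. Let V ⊆ B(h*, r) with h* ∈ V, and let A = DIS(V). Then for any h ∈ V with err(h) > r/2, the conditional probability D({x : h(x) ≠ h*(x)} | A) ≥ 1/(2θ), provided D(A) > 0. -/

import Mathlib

open MeasureTheory

open scoped ENNReal

section Disagreement

variable {α β : Type*}

def disagreementRegion (V : Set (α → β)) : Set α :=
  {x | ∃ h₁ ∈ V, ∃ h₂ ∈ V, h₁ x ≠ h₂ x}

theorem disagreementRegion_mono {V W : Set (α → β)} (hVW : V ⊆ W) :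
    disagreementRegion V ⊆ disagreementRegion W := by
  rintro x ⟨h₁, h₁V, h₂, h₂V, hne⟩
  exact ⟨h₁, hVW h₁V, h₂, hVW h₂V, hne⟩

theorem setOf_ne_subset_disagreementRegion {V : Set (α → β)} {f g : α → β} (hf : f ∈ V)
    (hg : g ∈ V) : {x | f x ≠ g x} ⊆ disagreementRegion V :=
  fun _ hx => ⟨f, hf, g, hg, hx⟩

end Disagreement

namespace ENNReal

/-- Holds without side conditions: for `θ = 0` or `θ = ∞` the left side is `∞ * 0 = 0`. -/
theorem inv_two_mul_mul_mul_le_div_two (θ r : ℝ≥0∞) : (2 * θ)⁻¹ * (θ * r) ≤ r / 2 := by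
  rcases eq_or_ne θ 0 with rfl | hθ0
  · simp
  rcases eq_or_ne θ ⊤ with rfl | hθtop
  · simp
  rw [ENNReal.mul_inv (Or.inl two_ne_zero) (Or.inl ofNat_ne_top), mul_assoc,
    ← mul_assoc θ⁻¹, ENNReal.inv_mul_cancel hθ0 hθtop, one_mul, ENNReal.div_eq_inv_mul]

theorem inv_two_mul_le_div_of_le_mul {a b θ r : ℝ≥0∞} (ha : a ≤ θ * r) (hb : r / 2 ≤ b)
    (ha0 : a ≠ 0) (hatop : a ≠ ⊤) : (2 * θ)⁻¹ ≤ b / a := by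
  rw [ENNReal.le_div_iff_mul_le (Or.inl ha0) (Or.inl hatop)]
  calc (2 * θ)⁻¹ * a ≤ (2 * θ)⁻¹ * (θ * r) := by gcongr
    _ ≤ r / 2 := inv_two_mul_mul_mul_le_div_two θ r
    _ ≤ b := hb

end ENNReal

theorem conditional_disagreement_lower_bound_general {G : Type*} [MeasurableSpace G]
    (D : Measure G) [IsProbabilityMeasure D]
    (H : Set (G → ℤ)) (hstar : G → ℤ)
    (err : (G → ℤ) → ENNReal) (herr : ∀ h, err h = D {x | h x ≠ hstar x})
    (θ r : ENNReal)
    (hθ : D {x : G | ∃ h₁ ∈ {h ∈ H | err h ≤ r}, ∃ h₂ ∈ {h ∈ H | err h ≤ r}, h₁ x ≠ h₂ x}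
            ≤ θ * r)
    (V : Set (G → ℤ)) (hVB : V ⊆ {h ∈ H | err h ≤ r}) (hstarV : hstar ∈ V)
    (A : Set G) (hA : A = {x : G | ∃ h₁ ∈ V, ∃ h₂ ∈ V, h₁ x ≠ h₂ x})
    (hApos : 0 < D A)
    (h : G → ℤ) (hhV : h ∈ V) (hherr : r / 2 < err h) :
    1 / (2 * θ) ≤ D ({x | h x ≠ hstar x} ∩ A) / D A := by
  change A = disagreementRegion V at hA
  have hdis : {x | h x ≠ hstar x} ⊆ A := hA ▸ setOf_ne_subset_disagreementRegion hhV hstarV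
  have hAθr : D A ≤ θ * r := (measure_mono (hA ▸ disagreementRegion_mono hVB)).trans hθ
  have hrerr : r / 2 ≤ D ({x | h x ≠ hstar x} ∩ A) := by
    rw [Set.inter_eq_self_of_subset_left hdis, ← herr]
    exact hherr.le
  rw [one_div]
  exact ENNReal.inv_two_mul_le_div_of_le_mul hAθr hrerr hApos.ne' (measure_ne_top D A)

theorem conditional_disagreement_lower_bound {G : Type*} [MeasurableSpace G]
    (D : Measure G) [IsProbabilityMeasure D]
    (H : Set (G → ℤ)) (hstar : G → ℤ) (hstarH : hstar ∈ H)
    (err : (G → ℤ) → ENNReal) (herr : ∀ h, err h = D {x | h x ≠ hstar x})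
    (θ r ε : ENNReal) (hrε : ε ≤ r)
    (hθ : D {x : G | ∃ h₁ ∈ {h ∈ H | err h ≤ r}, ∃ h₂ ∈ {h ∈ H | err h ≤ r}, h₁ x ≠ h₂ x}
            ≤ θ * r)
    (V : Set (G → ℤ)) (hVB : V ⊆ {h ∈ H | err h ≤ r}) (hstarV : hstar ∈ V)
    (A : Set G) (hA : A = {x : G | ∃ h₁ ∈ V, ∃ h₂ ∈ V, h₁ x ≠ h₂ x})
    (hApos : 0 < D A)
    (h : G → ℤ) (hhV : h ∈ V) (hherr : r / 2 < err h) :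
    1 / (2 * θ) ≤ D ({x | h x ≠ hstar x} ∩ A) / D A :=
  conditional_disagreement_lower_bound_general D H hstar err herr θ r hθ V hVB hstarV A hA hApos h
    hhV hherr
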